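/- arXiv:2401.12641 — 2 statements merged into one kernel-verified Lean document; each statement's English description precedes it below -/
import Mathlib

section
/- Let f : (ℕ→ℕ) → Set (ℕ→ℕ) be a problem, let (a_n) be a sequence in dom f converging to a point a ∈ dom f, and let S = {a_n | n ∈ ℕ} ∪ {a}. If there is no F : (ℕ→ℕ) → (ℕ→ℕ) continuous on S with F x ∈ f x for all x ∈ S, then for every p ∈ f a there exists k ∈ ℕ such that for every N ∈ ℕ there exists j > N with f(a_j) ∩ {q | ∀ i ≤ k, q i = p i} = ∅. -/
/-- The domain of a problem (multivalued function on Baire space). -/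
def domP (f : (ℕ → ℕ) → Set (ℕ → ℕ)) : Set (ℕ → ℕ) := {p | f p ≠ ∅}

/-!
Argue by contraposition: if every cylinder around `p` eventually meets `f (aₙ)`, a continuous
solution on `S` exists. Send `a` to `p`, and send any other `x` to a solution in `f x` lying in
the deepest cylinder around `p` that `f x` meets, the depth being capped by the length of the
common prefix of `x` and `a` (which keeps it finite even when `f x` meets every cylinder around
`p`). Along the sequence these depths tend to infinity, so the selected solutions converge to `p`;
and continuity on `S` needs nothing more, since all points of `S` other than `a` are isolated
in `S`.
-/

open Filter Set Topology PiNat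

section RangeOfConvergentSequence

variable {X Y : Type*} [TopologicalSpace X] [TopologicalSpace Y]

theorem nhdsWithin_range_sdiff_singleton_le_map_atTop [T1Space X] (u : ℕ → X) (x : X) :
    𝓝[range u \ {x}] x ≤ map u atTop := by
  refine (atTop_basis.map u).ge_iff.2 fun N _ => ?_
  have hfin : (u '' Iio N \ {x}).Finite := ((finite_Iio N).image u).sdiff
  refine mem_nhdsWithin_iff_exists_mem_nhds_inter.2
    ⟨_, hfin.isClosed.compl_mem_nhds fun h => h.2 rfl, ?_⟩
  rintro _ ⟨hy, ⟨n, rfl⟩, hne⟩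
  exact ⟨n, mem_Ici.2 (not_lt.1 fun hn => hy ⟨⟨n, hn, rfl⟩, hne⟩), rfl⟩

theorem continuousOn_range_union_singleton_of_tendsto [T2Space X] {u : ℕ → X} {a : X}
    {F : X → Y} (hu : Tendsto u atTop (𝓝 a)) (hF : Tendsto (F ∘ u) atTop (𝓝 (F a))) :
    ContinuousOn F (range u ∪ {a}) := by
  intro x _
  rw [union_singleton, continuousWithinAt_insert, ← continuousWithinAt_sdiff_self]
  have hmap := nhdsWithin_range_sdiff_singleton_le_map_atTop u x
  rcases eq_or_ne x a with rfl | hxa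
  · exact (tendsto_map'_iff.2 hF).mono_left hmap
  · have hbot : 𝓝[range u \ {x}] x = ⊥ :=
      le_bot_iff.1 <|
        (disjoint_nhds_nhds.2 hxa).eq_bot ▸ le_inf nhdsWithin_le_nhds (hmap.trans hu)
    rw [ContinuousWithinAt, hbot]
    exact tendsto_bot

end RangeOfConvergentSequence

namespace PiNat

theorem nhds_hasBasis_cylinder {E : ℕ → Type*} [∀ n, TopologicalSpace (E n)]
    [∀ n, DiscreteTopology (E n)] (x : ∀ n, E n) :
    (𝓝 x).HasBasis (fun _ => True) (cylinder x) := by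
  refine ⟨fun t => ⟨fun ht => ?_, fun ⟨n, _, hn⟩ => ?_⟩⟩
  · obtain ⟨_, ⟨y, n, rfl⟩, hx, hsub⟩ := (isTopologicalBasis_cylinders E).mem_nhds_iff.1 ht
    exact ⟨n, trivial, mem_cylinder_iff_eq.1 hx ▸ hsub⟩
  · exact mem_of_superset ((isOpen_cylinder E x n).mem_nhds (self_mem_cylinder x n)) hn

end PiNat

section SelectionTowardPoint

variable (f : (ℕ → ℕ) → Set (ℕ → ℕ)) (a p : ℕ → ℕ)

open Classical in
noncomputable def depthToward (x : ℕ → ℕ) : ℕ :=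
  Nat.findGreatest (fun n => (f x ∩ cylinder p n).Nonempty) (firstDiff x a)

open Classical in
noncomputable def selectToward (x : ℕ → ℕ) : ℕ → ℕ :=
  if x = a then p else Classical.epsilon fun q => q ∈ f x ∩ cylinder p (depthToward f a p x)

variable {f a p}

open Classical in
theorem inter_cylinder_depthToward_nonempty {x : ℕ → ℕ} (hx : (f x).Nonempty) :
    (f x ∩ cylinder p (depthToward f a p x)).Nonempty :=
  Nat.findGreatest_spec (P := fun n => (f x ∩ cylinder p n).Nonempty) (Nat.zero_le _)
    (by simpa using hx)

open Classical in
theorem le_depthToward {x : ℕ → ℕ} {n : ℕ} (hne : x ≠ a) (hxa : x ∈ cylinder a n)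
    (hn : (f x ∩ cylinder p n).Nonempty) : n ≤ depthToward f a p x :=
  Nat.le_findGreatest ((mem_cylinder_iff_le_firstDiff hne n).1 hxa) hn

theorem selectToward_mem_inter_cylinder {x : ℕ → ℕ} (hne : x ≠ a) (hx : (f x).Nonempty) :
    selectToward f a p x ∈ f x ∩ cylinder p (depthToward f a p x) := by
  rw [selectToward, if_neg hne]
  exact Classical.epsilon_spec (inter_cylinder_depthToward_nonempty hx)

theorem selectToward_mem (hp : p ∈ f a) {x : ℕ → ℕ} (hx : (f x).Nonempty) :
    selectToward f a p x ∈ f x := by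
  rcases eq_or_ne x a with rfl | hne
  · simpa [selectToward] using hp
  · exact (selectToward_mem_inter_cylinder hne hx).1

theorem tendsto_selectToward_comp {u : ℕ → ℕ → ℕ} (hu : Tendsto u atTop (𝓝 a))
    (hdom : ∀ j, (f (u j)).Nonempty)
    (hnear : ∀ n, ∀ᶠ j in atTop, (f (u j) ∩ cylinder p n).Nonempty) :
    Tendsto (selectToward f a p ∘ u) atTop (𝓝 p) := by
  refine (nhds_hasBasis_cylinder p).tendsto_right_iff.2 fun n _ => ?_
  filter_upwards [hu.eventually ((nhds_hasBasis_cylinder a).mem_of_mem trivial), hnear n]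
    with j hja hjp
  rcases eq_or_ne (u j) a with hj | hne
  · simp [selectToward, hj]
  · exact cylinder_anti p (le_depthToward hne hja hjp)
      (selectToward_mem_inter_cylinder hne (hdom j)).2

end SelectionTowardPoint

theorem escape_from_limit_solution_general (f : (ℕ → ℕ) → Set (ℕ → ℕ)) (a : ℕ → ℕ)
    (aseq : ℕ → (ℕ → ℕ))
    (hconv : Filter.Tendsto aseq Filter.atTop (nhds a))
    (han : ∀ n, aseq n ∈ domP f)
    (hdisc : ¬ ∃ F : (ℕ → ℕ) → (ℕ → ℕ),
        ContinuousOn F (Set.range aseq ∪ {a}) ∧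
        ∀ x ∈ Set.range aseq ∪ {a}, F x ∈ f x) :
    ∀ p ∈ f a, ∃ k : ℕ, ∀ N : ℕ, ∃ j > N,
      f (aseq j) ∩ {q : ℕ → ℕ | ∀ i ≤ k, q i = p i} = ∅ := by
  intro p hp
  by_contra! hmeet
  have hdom : ∀ j, (f (aseq j)).Nonempty := fun j => nonempty_iff_ne_empty.2 (han j)
  have hnear : ∀ n, ∀ᶠ j in atTop, (f (aseq j) ∩ cylinder p n).Nonempty := fun n => by
    obtain ⟨N, hN⟩ := hmeet n
    filter_upwards [eventually_gt_atTop N] with j hj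
    exact (hN j hj).mono <|
      inter_subset_inter_right _ fun q (hq : ∀ i ≤ n, q i = p i) i hi => hq i hi.le
  refine hdisc ⟨selectToward f a p, continuousOn_range_union_singleton_of_tendsto hconv ?_, ?_⟩
  · simpa [selectToward] using tendsto_selectToward_comp hconv hdom hnear
  · rintro _ (⟨j, rfl⟩ | rfl)
    · exact selectToward_mem hp (hdom j)
    · exact selectToward_mem hp ⟨p, hp⟩

theorem escape_from_limit_solution (f : (ℕ → ℕ) → Set (ℕ → ℕ)) (a : ℕ → ℕ)
    (aseq : ℕ → (ℕ → ℕ))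
    (hconv : Filter.Tendsto aseq Filter.atTop (nhds a))
    (ha : a ∈ domP f) (han : ∀ n, aseq n ∈ domP f)
    (hdisc : ¬ ∃ F : (ℕ → ℕ) → (ℕ → ℕ),
        ContinuousOn F (Set.range aseq ∪ {a}) ∧
        ∀ x ∈ Set.range aseq ∪ {a}, F x ∈ f x) :
    ∀ p ∈ f a, ∃ k : ℕ, ∀ N : ℕ, ∃ j > N,
      f (aseq j) ∩ {q : ℕ → ℕ | ∀ i ≤ k, q i = p i} = ∅ :=
  escape_from_limit_solution_general f a aseq hconv han hdisc
end

section
/- A first-order problem f : (ℕ→ℕ) → Set ℕ is discontinuous if and only if ACC_ℕ ≤_W* f. -/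
/-- The domain of a first-order problem. -/
def domFO (f : (ℕ → ℕ) → Set ℕ) : Set (ℕ → ℕ) := {p | f p ≠ ∅}

/-- The problem `ACC_ℕ`. -/
def ACCN (p : ℕ → ℕ) : Set ℕ :=
  {n | (∀ i j, p i ≠ 0 → p j ≠ 0 → p i = p j) ∧ ∀ k, p k ≠ n + 1}

/-- Continuity of a first-order problem: it has a choice function continuous on its domain. -/
def FOContinuous (g : (ℕ → ℕ) → Set ℕ) : Prop :=
  ∃ F : (ℕ → ℕ) → ℕ, ContinuousOn F (domFO g) ∧ ∀ p ∈ domFO g, F p ∈ g p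

/-- Continuous Weihrauch reducibility between first-order problems. -/
def RedFOFO (f g : (ℕ → ℕ) → Set ℕ) : Prop :=
  ∃ (H : (ℕ → ℕ) → (ℕ → ℕ)) (K : (ℕ → ℕ) × ℕ → ℕ),
    ContinuousOn H (domFO f) ∧
    ContinuousOn K {pn : (ℕ → ℕ) × ℕ | pn.1 ∈ domFO f ∧ pn.2 ∈ g (H pn.1)} ∧
    (∀ p ∈ domFO f, H p ∈ domFO g) ∧
    (∀ p ∈ domFO f, ∀ n ∈ g (H p), K (p, n) ∈ f p)

/-!
If every point of the domain of `f` has a cylinder on which a single answer is correct, choosing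
the answer of the shortest such cylinder gives a continuous realizer; so a discontinuous `f` has a
point `p₀` of its domain every cylinder around which contains, for each `n`, an instance `Q n t`
refuting `n`. An `ACC_ℕ`-instance `p` is then sent to `p₀` while it is zero, and to `Q (c - 1) j`
as soon as its first nonzero value `c` appears at position `j`; any answer `n` of `f` for it
differs from `c - 1`, hence solves `p`. Conversely `ACC_ℕ` itself is discontinuous at the zero
sequence, since `Pi.single t (n + 1)` is arbitrarily close to it and rules out the answer `n`.
-/

open Filter Topology PiNat

section Cylinders

variable {E : ℕ → Type*} [∀ n, TopologicalSpace (E n)] [∀ n, DiscreteTopology (E n)]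

theorem PiNat.hasBasis_nhds_cylinder (x : ∀ n, E n) :
    (𝓝 x).HasBasis (fun _ : ℕ => True) (cylinder x) := by
  refine ⟨fun s => ⟨fun hs => ?_, fun ⟨n, _, hn⟩ => mem_of_superset
    ((isOpen_cylinder E x n).mem_nhds (self_mem_cylinder x n)) hn⟩⟩
  obtain ⟨_, ⟨y, n, rfl⟩, hxy, hs⟩ := (isTopologicalBasis_cylinders E).mem_nhds_iff.1 hs
  exact ⟨n, trivial, (mem_cylinder_iff_eq.1 hxy) ▸ hs⟩

theorem PiNat.continuousWithinAt_iff_exists_cylinder {Y : Type*} [TopologicalSpace Y]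
    [DiscreteTopology Y] {F : (∀ n, E n) → Y} {s : Set (∀ n, E n)} {x : ∀ n, E n} :
    ContinuousWithinAt F s x ↔ ∃ n, ∀ y ∈ cylinder x n ∩ s, F y = F x := by
  rw [ContinuousWithinAt, nhds_discrete Y, tendsto_pure,
    (nhdsWithin_hasBasis (hasBasis_nhds_cylinder x) s).eventually_iff]
  simp only [true_and]

end Cylinders

section LocalSolvability

variable {f : (ℕ → ℕ) → Set ℕ}

def SolvesOn (f : (ℕ → ℕ) → Set ℕ) (n : ℕ) (C : Set (ℕ → ℕ)) : Prop :=
  ∀ q ∈ C ∩ domFO f, n ∈ f q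

def LocallySolvableAt (f : (ℕ → ℕ) → Set ℕ) (p : ℕ → ℕ) : Prop :=
  ∃ t n, SolvesOn f n (cylinder p t)

open Classical in
noncomputable def solutionOn (f : (ℕ → ℕ) → Set ℕ) (C : Set (ℕ → ℕ)) : ℕ :=
  if h : ∃ n, SolvesOn f n C then h.choose else 0

open Classical in
noncomputable def gluedChoice (f : (ℕ → ℕ) → Set ℕ) (p : ℕ → ℕ) : ℕ :=
  if h : LocallySolvableAt f p then solutionOn f (cylinder p (Nat.find h)) else 0

theorem solutionOn_mem {C : Set (ℕ → ℕ)} (h : ∃ n, SolvesOn f n C) {q : ℕ → ℕ}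
    (hq : q ∈ C ∩ domFO f) : solutionOn f C ∈ f q := by
  rw [solutionOn, dif_pos h]
  exact h.choose_spec q hq

open Classical in
theorem gluedChoice_mem {p : ℕ → ℕ} (hp : p ∈ domFO f) (h : LocallySolvableAt f p) :
    gluedChoice f p ∈ f p := by
  rw [gluedChoice, dif_pos h]
  exact solutionOn_mem (Nat.find_spec h) ⟨self_mem_cylinder p _, hp⟩

open Classical in
theorem gluedChoice_eq_of_mem_cylinder {p y : ℕ → ℕ} (h : LocallySolvableAt f p)
    (hy : y ∈ cylinder p (Nat.find h)) : gluedChoice f y = gluedChoice f p := by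
  have hcyl : ∀ t ≤ Nat.find h, cylinder y t = cylinder p t := fun t ht =>
    mem_cylinder_iff_eq.1 (cylinder_anti p ht hy)
  have hy' : LocallySolvableAt f y := ⟨Nat.find h, hcyl _ le_rfl ▸ Nat.find_spec h⟩
  have hfind : Nat.find hy' = Nat.find h :=
    (Nat.find_congr (q := fun t => ∃ n, SolvesOn f n (cylinder y t)) (Nat.find_spec h)
      fun t ht => by rw [hcyl t ht]).symm
  rw [gluedChoice, dif_pos hy', gluedChoice, dif_pos h, hfind, hcyl _ le_rfl]

theorem foContinuous_iff_forall_locallySolvableAt :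
    FOContinuous f ↔ ∀ p ∈ domFO f, LocallySolvableAt f p := by
  constructor
  · rintro ⟨F, hF, hFf⟩ p hp
    obtain ⟨t, ht⟩ := continuousWithinAt_iff_exists_cylinder.1 (hF p hp)
    exact ⟨t, F p, fun q hq => ht q hq ▸ hFf q hq.2⟩
  · intro h
    refine ⟨gluedChoice f, fun p hp => ?_, fun p hp => gluedChoice_mem hp (h p hp)⟩
    exact continuousWithinAt_iff_exists_cylinder.2
      ⟨_, fun y hy => gluedChoice_eq_of_mem_cylinder (h p hp) hy.1⟩

end LocalSolvability

theorem FOContinuous.of_redFOFO {f g : (ℕ → ℕ) → Set ℕ} (hg : FOContinuous g)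
    (hfg : RedFOFO f g) : FOContinuous f := by
  obtain ⟨H, K, hH, hK, hHdom, hK_mem⟩ := hfg
  obtain ⟨G, hG, hG_mem⟩ := hg
  refine ⟨fun p => K (p, G (H p)), ?_, fun p hp => hK_mem p hp _ (hG_mem _ (hHdom p hp))⟩
  have hGH : ContinuousOn (fun p => (p, G (H p))) (domFO f) :=
    continuousOn_id.prodMk (hG.comp hH hHdom)
  exact hK.comp hGH fun p hp => ⟨hp, hG_mem _ (hHdom p hp)⟩

theorem mem_domFO_ACCN {p : ℕ → ℕ} :
    p ∈ domFO ACCN ↔ ∀ i j, p i ≠ 0 → p j ≠ 0 → p i = p j := by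
  refine ⟨fun hp => (Set.nonempty_iff_ne_empty.2 hp).some_mem.1, fun hp => ?_⟩
  refine Set.nonempty_iff_ne_empty.1 ?_
  by_cases h : ∃ k, p k ≠ 0
  · obtain ⟨k, hk⟩ := h
    refine ⟨p k, hp, fun j => ?_⟩
    by_cases hj : p j = 0
    · omega
    · have := hp j k hj hk
      omega
  · push Not at h
    exact ⟨0, hp, fun k => by simp [h k]⟩

theorem single_mem_domFO_ACCN (m c : ℕ) : Pi.single m c ∈ domFO ACCN := by
  have hsupp : ∀ i, (Pi.single m c : ℕ → ℕ) i ≠ 0 → i = m := fun i hi =>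
    by_contra fun h => hi (by simp [h])
  exact mem_domFO_ACCN.2 fun i j hi hj => by rw [hsupp i hi, hsupp j hj]

theorem not_foContinuous_ACCN : ¬ FOContinuous ACCN := by
  rintro ⟨F, hF, hF_mem⟩
  have h0 : (0 : ℕ → ℕ) ∈ domFO ACCN := mem_domFO_ACCN.2 fun _ _ h => absurd rfl h
  obtain ⟨t, ht⟩ := continuousWithinAt_iff_exists_cylinder.1 (hF 0 h0)
  set q : ℕ → ℕ := Pi.single t (F 0 + 1)
  have hq : q ∈ cylinder 0 t ∩ domFO ACCN :=
    ⟨update_mem_cylinder 0 t _, single_mem_domFO_ACCN t _⟩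
  have hFq := hF_mem q hq.2
  rw [ht q hq] at hFq
  exact hFq.2 t (Pi.single_eq_same t _)

section Reduction

open Classical in
noncomputable def accnReductionMap (p₀ : ℕ → ℕ) (Q : ℕ → ℕ → ℕ → ℕ) (p : ℕ → ℕ) : ℕ → ℕ :=
  if h : ∃ j, p j ≠ 0 then Q (p (Nat.find h) - 1) (Nat.find h) else p₀

variable {p₀ : ℕ → ℕ} {Q : ℕ → ℕ → ℕ → ℕ}

open Classical in
theorem accnReductionMap_eq_of_mem_cylinder {p y : ℕ → ℕ} (h : ∃ j, p j ≠ 0)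
    (hy : y ∈ cylinder p (Nat.find h + 1)) :
    accnReductionMap p₀ Q y = accnReductionMap p₀ Q p := by
  have hagree : ∀ j ≤ Nat.find h, y j = p j := fun j hj => hy j (Nat.lt_succ_of_le hj)
  have hy' : ∃ j, y j ≠ 0 := ⟨_, hagree _ le_rfl ▸ Nat.find_spec h⟩
  have hfind : Nat.find hy' = Nat.find h :=
    (Nat.find_congr (p := fun j => p j ≠ 0) (q := fun j => y j ≠ 0) (Nat.find_spec h)
      fun j hj => by rw [hagree j hj]).symm
  rw [accnReductionMap, dif_pos hy', accnReductionMap, dif_pos h, hfind, hagree _ le_rfl]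

theorem accnReductionMap_mem_cylinder (hQ : ∀ n t, Q n t ∈ cylinder p₀ t) {t : ℕ}
    {y : ℕ → ℕ} (hy : y ∈ cylinder 0 t) : accnReductionMap p₀ Q y ∈ cylinder p₀ t := by
  rw [accnReductionMap]
  split_ifs with h
  · refine cylinder_anti p₀ (not_lt.1 fun hlt => Nat.find_spec h ?_) (hQ _ _)
    exact hy _ hlt
  · exact self_mem_cylinder p₀ t

theorem continuous_accnReductionMap (hQ : ∀ n t, Q n t ∈ cylinder p₀ t) :
    Continuous (accnReductionMap p₀ Q) := by
  refine continuous_iff_continuousAt.2 fun p => ?_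
  rw [ContinuousAt, (hasBasis_nhds_cylinder p).tendsto_iff (hasBasis_nhds_cylinder _)]
  intro t _
  by_cases h : ∃ j, p j ≠ 0
  · refine ⟨Nat.find h + 1, trivial, fun y hy => ?_⟩
    rw [accnReductionMap_eq_of_mem_cylinder h hy]
    exact self_mem_cylinder _ t
  · push Not at h
    have hp : p = 0 := funext h
    subst hp
    have h0 : accnReductionMap p₀ Q 0 = p₀ := by simp [accnReductionMap]
    rw [h0]
    exact ⟨t, trivial, fun y hy => accnReductionMap_mem_cylinder hQ hy⟩

theorem redFOFO_ACCN_of_not_locallySolvableAt {f : (ℕ → ℕ) → Set ℕ} (hp₀ : p₀ ∈ domFO f)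
    (h : ¬ LocallySolvableAt f p₀) : RedFOFO ACCN f := by
  simp only [LocallySolvableAt, SolvesOn, not_exists, not_forall, exists_prop] at h
  choose Q hQ hQf using fun n t => h t n
  refine ⟨accnReductionMap p₀ Q, Prod.snd, (continuous_accnReductionMap fun n t =>
    (hQ n t).1).continuousOn, continuous_snd.continuousOn, fun p _ => ?_, fun p hp n hn => ?_⟩
  · rw [accnReductionMap]
    split_ifs
    exacts [(hQ _ _).2, hp₀]
  · refine ⟨mem_domFO_ACCN.1 hp, fun k hk => ?_⟩
    have h : ∃ j, p j ≠ 0 := ⟨k, by omega⟩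
    have hval : p (Nat.find h) = n + 1 :=
      hk ▸ mem_domFO_ACCN.1 hp _ _ (Nat.find_spec h) (by omega)
    rw [accnReductionMap, dif_pos h, hval, Nat.add_sub_cancel] at hn
    exact hQf _ _ hn

end Reduction

theorem first_order_discontinuous_iff_accn (f : (ℕ → ℕ) → Set ℕ) :
    ¬ FOContinuous f ↔ RedFOFO ACCN f := by
  refine ⟨fun hf => ?_, fun hr hf => not_foContinuous_ACCN (hf.of_redFOFO hr)⟩
  rw [foContinuous_iff_forall_locallySolvableAt] at hf
  push Not at hf
  obtain ⟨p₀, hp₀, hns⟩ := hf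
  exact redFOFO_ACCN_of_not_locallySolvableAt hp₀ hns
end
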